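/- Let n ≥ 1 and m ≥ 1. There exists a constant C = C(n,m) > 0 such that for every finite sequence I of indices in {1,…,n} with |I| = m, every smooth function u on an open subset of ℝ^{1+n}, every α ∈ {0,1,…,n}, and every point of the domain: |H^I ∂_α u| ≤ |∂_α H^I u| + C Σ_{|J| < m} Σ_{β=0}^{n} |∂_β H^J u|, where the inner sum runs over all finite sequences J of indices in {1,…,n} of length strictly less than m. -/

import Mathlib

/-!
The commutator of a boost with a coordinate derivative has constant coefficients,
`H_j ∂_β = ∂_β H_j - δ_{β0} ∂_j - δ_{βj} ∂_0`. Moving `∂_α` to the front of `H^I ∂_α u` one boost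
at a time, a boost `H_j` passing a term `c ∂_β H^J u` turns it into `c ∂_β H^{jJ} u` plus one term
`c' ∂_γ H^J u` with `|c'| ≤ |c|`. Hence `H^I ∂_α u - ∂_α H^I u` is a sum of fewer than `2^m` terms
`c ∂_β H^J u` with `|J| < m` and `|c| ≤ 1`, and the estimate holds with `C = 2^m`.
-/

open MeasureTheory

noncomputable section

variable {n : ℕ}

/-- The partial derivative `∂_α` on `ℝ^{1+n}`; index `0` is the time variable `t`. -/
def pd (α : Fin (n + 1)) (u : (Fin (n + 1) → ℝ) → ℝ) : (Fin (n + 1) → ℝ) → ℝ :=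
  fun p => fderiv ℝ u p (Pi.single α 1)

/-- The Euclidean length `r = |x|` of the spatial part of a point of `ℝ^{1+n}`. -/
def rad (p : Fin (n + 1) → ℝ) : ℝ := Real.sqrt (∑ i : Fin n, p i.succ ^ 2)

/-- The Lorentz boost `H_j = t ∂_j + x^j ∂_t`. -/
def Lb (j : Fin n) (u : (Fin (n + 1) → ℝ) → ℝ) : (Fin (n + 1) → ℝ) → ℝ :=
  fun p => p 0 * pd j.succ u p + p j.succ * pd 0 u p

/-- The iterated boost `H^I = H_{i₁} ∘ ⋯ ∘ H_{i_m}` for a finite sequence `I`. -/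
def HI : List (Fin n) → ((Fin (n + 1) → ℝ) → ℝ) → ((Fin (n + 1) → ℝ) → ℝ)
  | [], u => u
  | j :: I, u => Lb j (HI I u)

/-- The point `(√(T²+|x|²), x)` of the hyperboloid `H_T` over `x ∈ ℝⁿ`. -/
def hyp (T : ℝ) (x : Fin n → ℝ) : Fin (n + 1) → ℝ :=
  Fin.cons (Real.sqrt (T ^ 2 + ∑ i, x i ^ 2)) x

open scoped ContDiff

section

variable {U : Set (Fin (n + 1) → ℝ)} {f g u : (Fin (n + 1) → ℝ) → ℝ} {p : Fin (n + 1) → ℝ}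

theorem pd_congr (hU : IsOpen U) (hfg : ∀ q ∈ U, f q = g q) (hp : p ∈ U) (β : Fin (n + 1)) :
    pd β f p = pd β g p := by
  rw [pd, pd, (Filter.eventuallyEq_of_mem (hU.mem_nhds hp) hfg).fderiv_eq]

theorem pd_add (hf : DifferentiableAt ℝ f p) (hg : DifferentiableAt ℝ g p) (β : Fin (n + 1)) :
    pd β (f + g) p = pd β f p + pd β g p := by
  simp [pd, fderiv_add hf hg]

theorem pd_const_mul (hf : DifferentiableAt ℝ f p) (c : ℝ) (β : Fin (n + 1)) :
    pd β (fun q => c * f q) p = c * pd β f p := by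
  simp [pd, fderiv_const_mul hf]

theorem pd_coord_mul (hf : DifferentiableAt ℝ f p) (i β : Fin (n + 1)) :
    pd β (fun q => q i * f q) p = (if i = β then 1 else 0) * f p + p i * pd β f p := by
  have hcoord : fderiv ℝ (fun q : Fin (n + 1) → ℝ => q i) p = ContinuousLinearMap.proj i :=
    (ContinuousLinearMap.proj (R := ℝ) (φ := fun _ : Fin (n + 1) => ℝ) i).fderiv
  rw [pd, fderiv_fun_mul (differentiableAt_apply i p) hf, hcoord]
  simp only [add_apply, smul_apply, smul_eq_mul, ContinuousLinearMap.proj_apply, Pi.single_apply,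
    pd, eq_comm]
  ring

theorem pd_comm (hf : ContDiffAt ℝ 2 f p) (β γ : Fin (n + 1)) :
    pd β (pd γ f) p = pd γ (pd β f) p := by
  have hsymm : IsSymmSndFDerivAt ℝ f p :=
    hf.isSymmSndFDerivAt (by simp [minSmoothness_of_isRCLikeNormedField])
  have hdiff : DifferentiableAt ℝ (fderiv ℝ f) p :=
    (hf.fderiv_right (m := 1) le_rfl).differentiableAt one_ne_zero
  have hsecond : ∀ β γ : Fin (n + 1),
      pd β (pd γ f) p = fderiv ℝ (fderiv ℝ f) p (Pi.single β 1) (Pi.single γ 1) := by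
    intro β γ
    change fderiv ℝ (fun q => fderiv ℝ f q (Pi.single γ 1)) p _ = _
    rw [fderiv_clm_apply hdiff (differentiableAt_const _)]
    simp
  rw [hsecond, hsecond, hsymm]

theorem contDiffOn_pd (hU : IsOpen U) (hf : ContDiffOn ℝ ∞ f U) (β : Fin (n + 1)) :
    ContDiffOn ℝ ∞ (pd β f) U :=
  (ContinuousLinearMap.apply ℝ ℝ (Pi.single β 1)).contDiff.comp_contDiffOn
    (hf.fderiv_of_isOpen hU le_rfl)

theorem contDiffOn_Lb (hU : IsOpen U) (hf : ContDiffOn ℝ ∞ f U) (j : Fin n) :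
    ContDiffOn ℝ ∞ (Lb j f) U :=
  ((contDiffOn_apply ℝ ℝ 0 U).mul (contDiffOn_pd hU hf j.succ)).add
    ((contDiffOn_apply ℝ ℝ j.succ U).mul (contDiffOn_pd hU hf 0))

theorem contDiffOn_HI (hU : IsOpen U) (hf : ContDiffOn ℝ ∞ f U) :
    ∀ I : List (Fin n), ContDiffOn ℝ ∞ (HI I f) U
  | [] => hf
  | j :: I => contDiffOn_Lb hU (contDiffOn_HI hU hf I) j

theorem contDiffAt_two_of_contDiffOn (hU : IsOpen U) (hf : ContDiffOn ℝ ∞ f U) (hp : p ∈ U) :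
    ContDiffAt ℝ 2 f p :=
  (hf.contDiffAt (hU.mem_nhds hp)).of_le (by norm_cast)

theorem differentiableAt_pd (hf : ContDiffAt ℝ 2 f p) (β : Fin (n + 1)) :
    DifferentiableAt ℝ (pd β f) p :=
  ((hf.fderiv_right (m := 1) le_rfl).differentiableAt one_ne_zero).clm_apply
    (differentiableAt_const _)

theorem Lb_congr (hU : IsOpen U) (hfg : ∀ q ∈ U, f q = g q) (hp : p ∈ U) (j : Fin n) :
    Lb j f p = Lb j g p := by
  simp only [Lb, pd_congr hU hfg hp]

theorem Lb_add (hf : DifferentiableAt ℝ f p) (hg : DifferentiableAt ℝ g p) (j : Fin n) :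
    Lb j (f + g) p = Lb j f p + Lb j g p := by
  simp only [Lb, pd_add hf hg]
  ring

theorem Lb_const_mul (hf : DifferentiableAt ℝ f p) (c : ℝ) (j : Fin n) :
    Lb j (fun q => c * f q) p = c * Lb j f p := by
  simp only [Lb, pd_const_mul hf]
  ring

/-- `[H_j, ∂_β] = commCoef j β • ∂_{commDir j β}`. -/
def commDir (j : Fin n) (β : Fin (n + 1)) : Fin (n + 1) := if β = 0 then j.succ else 0

def commCoef (j : Fin n) (β : Fin (n + 1)) : ℝ := if β = 0 ∨ β = j.succ then -1 else 0

theorem abs_commCoef_le_one (j : Fin n) (β : Fin (n + 1)) : |commCoef j β| ≤ 1 := by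
  unfold commCoef; split_ifs <;> norm_num

theorem Lb_pd (hf : ContDiffAt ℝ 2 f p) (j : Fin n) (β : Fin (n + 1)) :
    Lb j (pd β f) p = pd β (Lb j f) p + commCoef j β * pd (commDir j β) f p := by
  have hLb : pd β (Lb j f) p
      = ((if 0 = β then 1 else 0) * pd j.succ f p + p 0 * pd β (pd j.succ f) p)
        + ((if j.succ = β then 1 else 0) * pd 0 f p + p j.succ * pd β (pd 0 f) p) := by
    rw [← pd_coord_mul (differentiableAt_pd hf j.succ), ← pd_coord_mul (differentiableAt_pd hf 0)]
    exact pd_add ((differentiableAt_apply _ _).mul (differentiableAt_pd hf _))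
      ((differentiableAt_apply _ _).mul (differentiableAt_pd hf _)) β
  rw [hLb, Lb, pd_comm hf j.succ β, pd_comm hf 0 β, commCoef, commDir]
  rcases eq_or_ne β 0 with rfl | hβ0
  · simp only [↓reduceIte, Fin.succ_ne_zero, true_or]
    ring
  rcases eq_or_ne β j.succ with rfl | hβj
  · simp only [(Fin.succ_ne_zero j).symm, Fin.succ_ne_zero, ↓reduceIte, or_true]
    ring
  · simp [hβ0, hβj, Ne.symm hβ0, Ne.symm hβj]

/-- The formal term `coef • ∂_dir H^word`. Kept formal so that the coefficients produced by
commuting boosts past derivatives do not depend on the function they are applied to. -/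
structure DerivTerm (n : ℕ) where
  coef : ℝ
  word : List (Fin n)
  dir : Fin (n + 1)

namespace DerivTerm

def eval (e : DerivTerm n) (u : (Fin (n + 1) → ℝ) → ℝ) : (Fin (n + 1) → ℝ) → ℝ :=
  fun p => e.coef * pd e.dir (HI e.word u) p

def boost (j : Fin n) (e : DerivTerm n) : List (DerivTerm n) :=
  [⟨e.coef, j :: e.word, e.dir⟩, ⟨e.coef * commCoef j e.dir, e.word, commDir j e.dir⟩]

end DerivTerm

def evalSum (L : List (DerivTerm n)) (u : (Fin (n + 1) → ℝ) → ℝ) : (Fin (n + 1) → ℝ) → ℝ :=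
  fun p => (L.map fun e => e.eval u p).sum

theorem evalSum_nil (u : (Fin (n + 1) → ℝ) → ℝ) : evalSum [] u = 0 := rfl

theorem evalSum_cons (e : DerivTerm n) (L : List (DerivTerm n)) (u : (Fin (n + 1) → ℝ) → ℝ) :
    evalSum (e :: L) u = e.eval u + evalSum L u := by
  funext p; simp [evalSum]

theorem evalSum_append (L M : List (DerivTerm n)) (u : (Fin (n + 1) → ℝ) → ℝ) :
    evalSum (L ++ M) u = evalSum L u + evalSum M u := by
  funext p; simp [evalSum]

theorem contDiffOn_eval (hU : IsOpen U) (hu : ContDiffOn ℝ ∞ u U) (e : DerivTerm n) :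
    ContDiffOn ℝ ∞ (e.eval u) U :=
  contDiffOn_const.mul (contDiffOn_pd hU (contDiffOn_HI hU hu e.word) e.dir)

theorem contDiffOn_evalSum (hU : IsOpen U) (hu : ContDiffOn ℝ ∞ u U) :
    ∀ L : List (DerivTerm n), ContDiffOn ℝ ∞ (evalSum L u) U
  | [] => contDiffOn_const
  | e :: L => by
    rw [evalSum_cons]
    exact (contDiffOn_eval hU hu e).add (contDiffOn_evalSum hU hu L)

theorem Lb_eval (hU : IsOpen U) (hu : ContDiffOn ℝ ∞ u U) (hp : p ∈ U) (j : Fin n)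
    (e : DerivTerm n) : Lb j (e.eval u) p = evalSum (e.boost j) u p := by
  have hHI := contDiffAt_two_of_contDiffOn hU (contDiffOn_HI hU hu e.word) hp
  rw [show e.eval u = fun q => e.coef * pd e.dir (HI e.word u) q from rfl,
    Lb_const_mul (differentiableAt_pd hHI _), Lb_pd hHI]
  simp only [evalSum, DerivTerm.eval, DerivTerm.boost, List.map_cons, HI, List.map_nil,
    List.sum_cons, List.sum_nil, add_zero]
  ring

theorem Lb_evalSum (hU : IsOpen U) (hu : ContDiffOn ℝ ∞ u U) (hp : p ∈ U) (j : Fin n) :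
    ∀ L : List (DerivTerm n), Lb j (evalSum L u) p = evalSum (L.flatMap (DerivTerm.boost j)) u p
  | [] => by simp [evalSum_nil, Lb, pd]
  | e :: L => by
    have hdiff {f : (Fin (n + 1) → ℝ) → ℝ} (hf : ContDiffOn ℝ ∞ f U) : DifferentiableAt ℝ f p :=
      (contDiffAt_two_of_contDiffOn hU hf hp).differentiableAt two_ne_zero
    rw [evalSum_cons, Lb_add (hdiff (contDiffOn_eval hU hu e))
      (hdiff (contDiffOn_evalSum hU hu L)), Lb_eval hU hu hp, Lb_evalSum hU hu hp j L,
      List.flatMap_cons, evalSum_append]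
    rfl

/-- The formal error `H^I ∂_α - ∂_α H^I`. -/
def commTerms : List (Fin n) → Fin (n + 1) → List (DerivTerm n)
  | [], _ => []
  | j :: I, α => ⟨commCoef j α, I, commDir j α⟩ :: (commTerms I α).flatMap (DerivTerm.boost j)

theorem length_commTerms_lt (I : List (Fin n)) (α : Fin (n + 1)) :
    (commTerms I α).length < 2 ^ I.length := by
  induction I with
  | nil => simp [commTerms]
  | cons j I ih =>
    simp only [commTerms, List.length_cons, List.length_flatMap, DerivTerm.boost, List.length_nil,
      zero_add, Nat.reduceAdd, List.map_const', List.sum_replicate, smul_eq_mul, pow_succ]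
    omega

theorem length_word_lt_of_mem_commTerms {I : List (Fin n)} {α : Fin (n + 1)} {e : DerivTerm n}
    (he : e ∈ commTerms I α) : e.word.length < I.length := by
  induction I generalizing e with
  | nil => simp [commTerms] at he
  | cons j I ih =>
    simp only [commTerms, List.mem_cons, List.mem_flatMap, DerivTerm.boost, List.mem_nil_iff,
      or_false] at he
    rcases he with rfl | ⟨e', he', rfl | rfl⟩
    · simp
    · simpa using ih he'
    · simpa using (ih he').trans (Nat.lt_succ_self _)

theorem abs_coef_le_one_of_mem_commTerms {I : List (Fin n)} {α : Fin (n + 1)} {e : DerivTerm n}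
    (he : e ∈ commTerms I α) : |e.coef| ≤ 1 := by
  induction I generalizing e with
  | nil => simp [commTerms] at he
  | cons j I ih =>
    simp only [commTerms, List.mem_cons, List.mem_flatMap, DerivTerm.boost, List.mem_nil_iff,
      or_false] at he
    rcases he with rfl | ⟨e', he', rfl | rfl⟩
    · exact abs_commCoef_le_one j α
    · exact ih (e := e') he'
    · rw [abs_mul]
      exact mul_le_one₀ (ih he') (abs_nonneg _) (abs_commCoef_le_one _ _)

theorem HI_pd_eq (hU : IsOpen U) (hu : ContDiffOn ℝ ∞ u U) (I : List (Fin n))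
    (α : Fin (n + 1)) :
    ∀ p ∈ U, HI I (pd α u) p = pd α (HI I u) p + evalSum (commTerms I α) u p := by
  induction I with
  | nil => simp [HI, commTerms, evalSum]
  | cons j I ih =>
    intro p hp
    have hHI : ContDiffOn ℝ ∞ (HI I u) U := contDiffOn_HI hU hu I
    have hdiff {f : (Fin (n + 1) → ℝ) → ℝ} (hf : ContDiffOn ℝ ∞ f U) : DifferentiableAt ℝ f p :=
      (contDiffAt_two_of_contDiffOn hU hf hp).differentiableAt two_ne_zero
    calc HI (j :: I) (pd α u) p
        = Lb j (pd α (HI I u) + evalSum (commTerms I α) u) p := Lb_congr hU ih hp j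
      _ = Lb j (pd α (HI I u)) p + Lb j (evalSum (commTerms I α) u) p :=
          Lb_add (hdiff (contDiffOn_pd hU hHI α)) (hdiff (contDiffOn_evalSum hU hu _)) j
      _ = pd α (HI (j :: I) u) p + evalSum (commTerms (j :: I) α) u p := by
          rw [Lb_pd (contDiffAt_two_of_contDiffOn hU hHI hp),
            Lb_evalSum hU hu hp, commTerms, evalSum_cons]
          simp only [HI, DerivTerm.eval, Pi.add_apply]
          ring

def lowerOrderSum (m : ℕ) (u : (Fin (n + 1) → ℝ) → ℝ) (p : Fin (n + 1) → ℝ) : ℝ :=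
  ∑ k ∈ Finset.range m, ∑ J : Fin k → Fin n, ∑ β : Fin (n + 1), |pd β (HI (List.ofFn J) u) p|

theorem abs_pd_HI_le_lowerOrderSum {m : ℕ} {J : List (Fin n)} (hJ : J.length < m)
    (u : (Fin (n + 1) → ℝ) → ℝ) (p : Fin (n + 1) → ℝ) (β : Fin (n + 1)) :
    |pd β (HI J u) p| ≤ lowerOrderSum m u p := by
  have hβ : |pd β (HI J u) p| ≤ ∑ γ : Fin (n + 1), |pd γ (HI J u) p| :=
    Finset.single_le_sum (f := fun γ => |pd γ (HI J u) p|) (fun _ _ => abs_nonneg _)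
      (Finset.mem_univ β)
  have hJ' : ∑ γ : Fin (n + 1), |pd γ (HI J u) p|
      ≤ ∑ K : Fin J.length → Fin n, ∑ γ : Fin (n + 1), |pd γ (HI (List.ofFn K) u) p| := by
    simpa only [List.ofFn_get] using Finset.single_le_sum
      (f := fun K : Fin J.length → Fin n => ∑ γ : Fin (n + 1), |pd γ (HI (List.ofFn K) u) p|)
      (fun _ _ => Finset.sum_nonneg fun _ _ => abs_nonneg _) (Finset.mem_univ J.get)
  have hk := Finset.single_le_sum
      (f := fun k => ∑ K : Fin k → Fin n, ∑ γ : Fin (n + 1), |pd γ (HI (List.ofFn K) u) p|)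
      (fun _ _ => Finset.sum_nonneg fun _ _ => Finset.sum_nonneg fun _ _ => abs_nonneg _)
      (Finset.mem_range.2 hJ)
  exact hβ.trans (hJ'.trans hk)

theorem abs_evalSum_le {m : ℕ} (L : List (DerivTerm n))
    (hL : ∀ e ∈ L, |e.coef| ≤ 1 ∧ e.word.length < m)
    (u : (Fin (n + 1) → ℝ) → ℝ) (p : Fin (n + 1) → ℝ) :
    |evalSum L u p| ≤ L.length * lowerOrderSum m u p := by
  induction L with
  | nil => simp [evalSum]
  | cons e L ih =>
    obtain ⟨hcoef, hword⟩ := hL e List.mem_cons_self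
    have he : |e.eval u p| ≤ lowerOrderSum m u p := by
      rw [DerivTerm.eval, abs_mul]
      exact mul_le_of_le_one_left (abs_nonneg _) hcoef |>.trans
        (abs_pd_HI_le_lowerOrderSum hword u p e.dir)
    have hrest := ih fun e' he' => hL e' (List.mem_cons_of_mem _ he')
    rw [evalSum_cons, Pi.add_apply, List.length_cons, Nat.cast_succ]
    linarith [abs_add_le (e.eval u p) (evalSum L u p)]

end

theorem boost_partial_commutator_estimate_general (n m : ℕ) :
    ∃ C > (0 : ℝ), ∀ I : Fin m → Fin n,
      ∀ U : Set (Fin (n + 1) → ℝ), IsOpen U →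
      ∀ u : (Fin (n + 1) → ℝ) → ℝ, ContDiffOn ℝ (⊤ : ℕ∞) u U →
      ∀ α : Fin (n + 1), ∀ p ∈ U,
        |HI (List.ofFn I) (pd α u) p|
          ≤ |pd α (HI (List.ofFn I) u) p|
            + C * ∑ k ∈ Finset.range m, ∑ J : Fin k → Fin n, ∑ β : Fin (n + 1),
                |pd β (HI (List.ofFn J) u) p| := by
  refine ⟨2 ^ m, by positivity, fun I U hU u hu α p hp => ?_⟩
  set L := commTerms (List.ofFn I) α
  have hL : ∀ e ∈ L, |e.coef| ≤ 1 ∧ e.word.length < m := fun e he =>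
    ⟨abs_coef_le_one_of_mem_commTerms he, by simpa using length_word_lt_of_mem_commTerms he⟩
  have hlen : (L.length : ℝ) ≤ 2 ^ m := by
    exact_mod_cast (by simpa using (length_commTerms_lt (List.ofFn I) α).le)
  have hS : 0 ≤ lowerOrderSum m u p := by unfold lowerOrderSum; positivity
  rw [HI_pd_eq hU hu _ α p hp]
  calc |pd α (HI (List.ofFn I) u) p + evalSum L u p|
      ≤ |pd α (HI (List.ofFn I) u) p| + L.length * lowerOrderSum m u p :=
        (abs_add_le _ _).trans (add_le_add le_rfl (abs_evalSum_le L hL u p))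
    _ ≤ |pd α (HI (List.ofFn I) u) p| + 2 ^ m * lowerOrderSum m u p := by gcongr

/-- commutator estimate between iterated boosts and coordinate
derivatives: `|H^I ∂_α u| ≤ |∂_α H^I u| + C Σ_{|J| < m} Σ_β |∂_β H^J u|`
for all sequences `I` of length `m`. -/
theorem boost_partial_commutator_estimate (n m : ℕ) (hn : 1 ≤ n) (hm : 1 ≤ m) :
    ∃ C > (0 : ℝ), ∀ I : Fin m → Fin n,
      ∀ U : Set (Fin (n + 1) → ℝ), IsOpen U →
      ∀ u : (Fin (n + 1) → ℝ) → ℝ, ContDiffOn ℝ (⊤ : ℕ∞) u U →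
      ∀ α : Fin (n + 1), ∀ p ∈ U,
        |HI (List.ofFn I) (pd α u) p|
          ≤ |pd α (HI (List.ofFn I) u) p|
            + C * ∑ k ∈ Finset.range m, ∑ J : Fin k → Fin n, ∑ β : Fin (n + 1),
                |pd β (HI (List.ofFn J) u) p| :=
  boost_partial_commutator_estimate_general n m
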